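/- Let R be a binary relation on ℕ whose convolution language is regular. Then the convolution language of the equivalence relation generated by R (the smallest reflexive, symmetric and transitive relation containing R) is also regular. -/

import Mathlib

/-- The convolution word of the pair `(m, n)`, over the three-letter alphabet `Fin 3`
(`0` plays the role of `s`, `1` of `l`, `2` of `r`). -/
def convWord (m n : ℕ) : List (Fin 3) :=
  List.replicate (min m n) 0 ++ List.replicate (m - min m n) 1 ++
    List.replicate (n - min m n) 2

/-- The convolution language of a binary relation on `ℕ`. -/
def convLang (R : ℕ → ℕ → Prop) : Language (Fin 3) :=
  {w | ∃ m n, R m n ∧ w = convWord m n}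

/-- A binary relation on `ℕ` is regular if its convolution language is regular. -/
def RegularRel (R : ℕ → ℕ → Prop) : Prop :=
  (convLang R).IsRegular

/-!
A relation `R ⊆ ℕ × ℕ` is regular exactly when it is eventually periodic: for some `K` and
`p > 0` it is invariant under the diagonal translation by `p` away from the axes, and under
horizontal and vertical translation by `p` at distance `≥ K` from the diagonal. A DFA pumps the
blocks of a convolution word with period `(card σ)!`; conversely an eventually periodic relation
has only finitely many left quotients (Myhill–Nerode).

So it suffices to show that the connectivity relation `E` of the graph `S = R ∪ R⁻¹` is eventually
periodic. Above `K`, translation by a multiple of `p` is a graph isomorphism. The key claim is that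
a vertex `x` which is `E`-related to a much smaller vertex satisfies `x - Q ~ x ~ x + Q`, where
`Q = p · ((p + 1) K)!`. Follow a path from `x` downwards while it stays above `t = x - (p + 1) K`.
If it uses an edge of length `≥ K`, stretching that edge by `Q` gives the claim at its endpoint.
Otherwise it descends by steps `< K` through `p + 1` bands of width `K` above `t`, so it meets two
vertices `a < b` with `p ∣ b - a < (p + 1) K`; translating the path from `a` to `b` by multiples
of `b - a` joins `a` to `a + Q`. In both cases the claim is carried back to `x` by translating the
path from `x`. Finally, an `E`-path either stays above `K`, and translates by `Q`, or comes close to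
`0`, and then both of its far-away endpoints pump.
-/

open Relation Function List
open scoped Nat

theorem Function.iterate_mem_periodicPts_of_card_le {α : Type*} [Fintype α] (f : α → α) (x : α)
    {n : ℕ} (hn : Fintype.card α ≤ n) : f^[n] x ∈ periodicPts f := by
  obtain ⟨i, j, hne, heq⟩ := Fintype.exists_ne_map_eq_of_card_lt
    (fun k : Fin (Fintype.card α + 1) => f^[k] x) (by simp)
  wlog hij : (i : ℕ) < j generalizing i j
  · exact this j i hne.symm heq.symm (by omega)
  have hper : IsPeriodicPt f (j - i) (f^[i] x) := by
    rw [IsPeriodicPt, IsFixedPt, ← iterate_add_apply, Nat.sub_add_cancel hij.le, heq]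
  rw [show n = (n - i) + i by omega, iterate_add_apply]
  exact mk_mem_periodicPts (by omega) (hper.apply_iterate _)

theorem Function.iterate_add_factorial_card {α : Type*} [Fintype α] (f : α → α) (x : α)
    {n : ℕ} (hn : Fintype.card α ≤ n) : f^[n + (Fintype.card α)!] x = f^[n] x := by
  rw [add_comm, iterate_add_apply]
  exact isPeriodicPt_factorial_card_of_mem_periodicPts (iterate_mem_periodicPts_of_card_le f x hn)

theorem DFA.evalFrom_replicate {α σ : Type*} (M : DFA α σ) (s : σ) (a : α) (n : ℕ) :
    M.evalFrom s (replicate n a) = (M.step · a)^[n] s := by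
  induction n generalizing s with
  | zero => rfl
  | succ n ih => exact ih (M.step s a)

theorem DFA.eval_append_replicate_add_factorial_append {α σ : Type*} [Fintype σ] (M : DFA α σ)
    (u w : List α) (a : α) {n : ℕ} (hn : Fintype.card σ ≤ n) :
    M.eval (u ++ replicate (n + (Fintype.card σ)!) a ++ w) = M.eval (u ++ replicate n a ++ w) := by
  simp only [DFA.eval, DFA.evalFrom_of_append, DFA.evalFrom_replicate,
    iterate_add_factorial_card _ _ hn]

theorem Language.isRegular_of_leftQuotient_mem {α : Type*} {L : Language α}
    {𝒬 : Set (Language α)} (hfin : 𝒬.Finite) (hL : L ∈ 𝒬)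
    (hquot : ∀ M ∈ 𝒬, ∀ a, M.leftQuotient [a] ∈ 𝒬) : L.IsRegular := by
  refine .of_finite_range_leftQuotient (hfin.subset ?_)
  rintro _ ⟨w, rfl⟩
  induction w using List.reverseRecOn with
  | nil => exact hL
  | append_singleton w a ih => rw [Language.leftQuotient_append]; exact hquot _ ih a

theorem exists_lt_add_eq_of_eventually_periodic {X : Type*} {f : ℕ → X} {K p : ℕ} (hp : 0 < p)
    (hf : ∀ n, K ≤ n → f (n + p) = f n) (n : ℕ) : ∃ n' < K + p, f n' = f n := by
  induction n using Nat.strong_induction_on with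
  | _ n ih =>
    by_cases hn : n < K + p
    · exact ⟨n, hn, rfl⟩
    · obtain ⟨n', hn', h⟩ := ih (n - p) (by omega)
      refine ⟨n', hn', h.trans ?_⟩
      rw [← hf (n - p) (by omega), Nat.sub_add_cancel (by omega)]

theorem finite_range_of_eventually_periodic {X : Type*} {f : ℕ → X} {K p : ℕ} (hp : 0 < p)
    (hf : ∀ n, K ≤ n → f (n + p) = f n) : (Set.range f).Finite := by
  refine ((Set.finite_Iio (K + p)).image f).subset ?_
  rintro _ ⟨n, rfl⟩
  exact exists_lt_add_eq_of_eventually_periodic hp hf n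

theorem finite_range_of_eventually_periodic₂ {X : Type*} {f : ℕ → ℕ → X} {K p : ℕ} (hp : 0 < p)
    (hf₁ : ∀ a b, K ≤ a → f (a + p) b = f a b) (hf₂ : ∀ a b, K ≤ b → f a (b + p) = f a b) :
    (Set.range (uncurry f)).Finite := by
  refine (((Set.finite_Iio (K + p)).prod (Set.finite_Iio (K + p))).image (uncurry f)).subset ?_
  rintro _ ⟨⟨a, b⟩, rfl⟩
  obtain ⟨a', ha', hfa⟩ :=
    exists_lt_add_eq_of_eventually_periodic (f := (f · b)) hp (fun n hn => hf₁ n b hn) a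
  obtain ⟨b', hb', hfb⟩ :=
    exists_lt_add_eq_of_eventually_periodic (f := f a') hp (fun n hn => hf₂ a' n hn) b
  exact ⟨(a', b'), ⟨ha', hb'⟩, hfb.trans hfa⟩

theorem convWord_zero_left (n : ℕ) : convWord 0 n = replicate n 2 := by
  simp [convWord]

theorem convWord_zero_right (m : ℕ) : convWord m 0 = replicate m 1 := by
  simp [convWord]

theorem convWord_succ_succ (m n : ℕ) : convWord (m + 1) (n + 1) = 0 :: convWord m n := by
  simp [convWord, Nat.add_min_add_right, replicate_succ]

theorem convWord_add_add (m n k : ℕ) :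
    convWord (m + k) (n + k) = replicate k 0 ++ convWord m n := by
  induction k with
  | zero => rfl
  | succ k ih => rw [← add_assoc, ← add_assoc, convWord_succ_succ, ih]; rfl

theorem convWord_self_add (m d : ℕ) : convWord m (m + d) = replicate m 0 ++ replicate d 2 := by
  simpa [add_comm, convWord_zero_left] using convWord_add_add 0 d m

theorem convWord_add_self (m d : ℕ) : convWord (m + d) m = replicate m 0 ++ replicate d 1 := by
  simpa [add_comm, convWord_zero_right] using convWord_add_add d 0 m

theorem convWord_inj {m n m' n' : ℕ} : convWord m n = convWord m' n' ↔ m = m' ∧ n = n' := by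
  refine ⟨fun h => ?_, fun h => h.1 ▸ h.2 ▸ rfl⟩
  have h0 := congrArg (count (0 : Fin 3)) h
  have h1 := congrArg (count (1 : Fin 3)) h
  have h2 := congrArg (count (2 : Fin 3)) h
  simp [convWord, count_replicate] at h0 h1 h2
  omega

theorem convWord_mem_convLang {R : ℕ → ℕ → Prop} {m n : ℕ} :
    convWord m n ∈ convLang R ↔ R m n := by
  refine ⟨?_, fun h => ⟨m, n, h, rfl⟩⟩
  rintro ⟨m', n', h, hw⟩
  obtain ⟨rfl, rfl⟩ := convWord_inj.mp hw
  exact h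

theorem convLang_leftQuotient_zero (R : ℕ → ℕ → Prop) :
    (convLang R).leftQuotient [0] = convLang (fun m n => R (m + 1) (n + 1)) := by
  ext w
  simp only [Language.mem_leftQuotient, singleton_append]
  constructor
  · rintro ⟨_ | m, _ | n, h, hw⟩
    · simp [convWord_zero_left] at hw
    · simp [convWord_zero_left, replicate_succ] at hw
    · simp [convWord_zero_right, replicate_succ] at hw
    · rw [convWord_succ_succ, cons.injEq] at hw
      exact ⟨m, n, h, hw.2⟩
  · rintro ⟨m, n, h, rfl⟩
    exact ⟨m + 1, n + 1, h, (convWord_succ_succ m n).symm⟩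

theorem convLang_leftQuotient_one (R : ℕ → ℕ → Prop) :
    (convLang R).leftQuotient [1] = convLang (fun m n => n = 0 ∧ R (m + 1) 0) := by
  ext w
  simp only [Language.mem_leftQuotient, singleton_append]
  constructor
  · rintro ⟨_ | m, _ | n, h, hw⟩
    · simp [convWord_zero_left] at hw
    · simp [convWord_zero_left, replicate_succ] at hw
    · rw [convWord_zero_right, replicate_succ, cons.injEq] at hw
      exact ⟨m, 0, ⟨rfl, h⟩, hw.2.trans (convWord_zero_right m).symm⟩
    · simp [convWord_succ_succ] at hw
  · rintro ⟨m, n, ⟨rfl, h⟩, rfl⟩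
    exact ⟨m + 1, 0, h, by simp [convWord_zero_right, replicate_succ]⟩

theorem convLang_leftQuotient_two (R : ℕ → ℕ → Prop) :
    (convLang R).leftQuotient [2] = convLang (fun m n => m = 0 ∧ R 0 (n + 1)) := by
  ext w
  simp only [Language.mem_leftQuotient, singleton_append]
  constructor
  · rintro ⟨_ | m, _ | n, h, hw⟩
    · simp [convWord_zero_left] at hw
    · rw [convWord_zero_left, replicate_succ, cons.injEq] at hw
      exact ⟨0, n, ⟨rfl, h⟩, hw.2.trans (convWord_zero_left n).symm⟩
    · simp [convWord_zero_right, replicate_succ] at hw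
    · simp [convWord_succ_succ] at hw
  · rintro ⟨m, n, ⟨rfl, h⟩, rfl⟩
    exact ⟨0, n + 1, h, by simp [convWord_zero_left, replicate_succ]⟩

theorem RegularRel.of_mem_finite_closed {R : ℕ → ℕ → Prop} {ℋ : Set (ℕ → ℕ → Prop)}
    (hfin : ℋ.Finite) (hR : R ∈ ℋ)
    (h0 : ∀ H ∈ ℋ, (fun m n => H (m + 1) (n + 1)) ∈ ℋ)
    (h1 : ∀ H ∈ ℋ, (fun m n => n = 0 ∧ H (m + 1) 0) ∈ ℋ)
    (h2 : ∀ H ∈ ℋ, (fun m n => m = 0 ∧ H 0 (n + 1)) ∈ ℋ) : RegularRel R := by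
  refine Language.isRegular_of_leftQuotient_mem (hfin.image convLang) ⟨R, hR, rfl⟩ ?_
  rintro _ ⟨H, hH, rfl⟩ a
  fin_cases a
  · exact ⟨_, h0 H hH, (convLang_leftQuotient_zero H).symm⟩
  · exact ⟨_, h1 H hH, (convLang_leftQuotient_one H).symm⟩
  · exact ⟨_, h2 H hH, (convLang_leftQuotient_two H).symm⟩

structure EventuallyPeriodicRel (R : ℕ → ℕ → Prop) (K p : ℕ) : Prop where
  shift {m n : ℕ} : K ≤ m → K ≤ n → (R (m + p) (n + p) ↔ R m n)
  stretch_right {m n : ℕ} : m + K ≤ n → (R m (n + p) ↔ R m n)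
  stretch_left {m n : ℕ} : n + K ≤ m → (R (m + p) n ↔ R m n)

namespace EventuallyPeriodicRel

variable {R : ℕ → ℕ → Prop} {K p : ℕ}

theorem of_symm [Std.Symm R] (shift : ∀ {m n}, K ≤ m → K ≤ n → (R (m + p) (n + p) ↔ R m n))
    (stretch_right : ∀ {m n}, m + K ≤ n → (R m (n + p) ↔ R m n)) : EventuallyPeriodicRel R K p :=
  ⟨shift, stretch_right, fun h => by
    rw [Std.Symm.iff (r := R), stretch_right h, Std.Symm.iff (r := R)]⟩

theorem symmGen (h : EventuallyPeriodicRel R K p) : EventuallyPeriodicRel (SymmGen R) K p :=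
  .of_symm (fun hm hn => or_congr (h.shift hm hn) (h.shift hn hm))
    (fun hmn => or_congr (h.stretch_right hmn) (h.stretch_left hmn))

theorem add {q : ℕ} (hp : EventuallyPeriodicRel R K p) (hq : EventuallyPeriodicRel R K q) :
    EventuallyPeriodicRel R K (p + q) where
  shift hm hn := by rw [← add_assoc, ← add_assoc, hq.shift (by omega) (by omega), hp.shift hm hn]
  stretch_right h := by rw [← add_assoc, hq.stretch_right (by omega), hp.stretch_right h]
  stretch_left h := by rw [← add_assoc, hq.stretch_left (by omega), hp.stretch_left h]

theorem mul (h : EventuallyPeriodicRel R K p) (k : ℕ) : EventuallyPeriodicRel R K (k * p) := by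
  induction k with
  | zero => exact ⟨fun _ _ => by simp, fun _ => by simp, fun _ => by simp⟩
  | succ k ih => rw [add_mul, one_mul]; exact ih.add h

theorem of_dvd {d : ℕ} (h : EventuallyPeriodicRel R K p) (hd : p ∣ d) :
    EventuallyPeriodicRel R K d := by
  obtain ⟨k, rfl⟩ := hd
  rw [mul_comm]
  exact h.mul k

end EventuallyPeriodicRel

theorem RegularRel.exists_eventuallyPeriodicRel {R : ℕ → ℕ → Prop} (hR : RegularRel R) :
    ∃ K p, 0 < p ∧ EventuallyPeriodicRel R K p := by
  obtain ⟨σ, _, M, hM⟩ := hR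
  set N := Fintype.card σ
  have pump (u w : List (Fin 3)) (x : Fin 3) {a : ℕ} (ha : N ≤ a) :
      u ++ replicate (a + N !) x ++ w ∈ convLang R ↔ u ++ replicate a x ++ w ∈ convLang R := by
    rw [← hM, DFA.mem_accepts, DFA.mem_accepts,
      DFA.eval_append_replicate_add_factorial_append _ _ _ _ ha]
  have mem (m n : ℕ) : R m n ↔ convWord m n ∈ convLang R := convWord_mem_convLang.symm
  refine ⟨N, N !, Nat.factorial_pos _, ⟨fun {m n} hm hn => ?_, fun {m n} h => ?_,
    fun {m n} h => ?_⟩⟩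
  · obtain ⟨k, m', n', rfl, rfl, hk⟩ : ∃ k m' n', m = m' + k ∧ n = n' + k ∧ N ≤ k :=
      ⟨min m n, m - min m n, n - min m n, by omega, by omega, by omega⟩
    rw [mem, mem, add_assoc, add_assoc, convWord_add_add, convWord_add_add]
    simpa using pump [] (convWord m' n') 0 hk
  · obtain ⟨d, rfl⟩ : ∃ d, n = m + d := ⟨n - m, by omega⟩
    rw [mem, mem, add_assoc, convWord_self_add, convWord_self_add]
    simpa using pump (replicate m 0) [] 2 (by omega)
  · obtain ⟨d, rfl⟩ : ∃ d, m = n + d := ⟨m - n, by omega⟩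
    rw [mem, mem, add_assoc, convWord_add_self, convWord_add_self]
    simpa using pump (replicate n 0) [] 1 (by omega)

theorem EventuallyPeriodicRel.regularRel {R : ℕ → ℕ → Prop} {K p : ℕ}
    (hR : EventuallyPeriodicRel R K p) (hp : 0 < p) : RegularRel R := by
  -- the derivatives of `R` along the words `0^a`, `0^a 2^b` and `0^a 1^b`
  set shifted : ℕ → ℕ → ℕ → Prop := fun a m n => R (m + a) (n + a)
  set right : ℕ → ℕ → ℕ → ℕ → Prop := fun a b m n => m = 0 ∧ R a (n + b + a)
  set left : ℕ → ℕ → ℕ → ℕ → Prop := fun a b m n => n = 0 ∧ R (m + b + a) a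
  have hfin : (Set.range shifted ∪ Set.range (uncurry right) ∪ Set.range (uncurry left) ∪
      {fun _ _ => False}).Finite := by
    refine ((((finite_range_of_eventually_periodic hp (K := K) ?_).union
      (finite_range_of_eventually_periodic₂ hp (K := K) ?_ ?_)).union
      (finite_range_of_eventually_periodic₂ hp (K := K) ?_ ?_)).union (Set.finite_singleton _))
    · intro a ha; funext m n
      simpa only [shifted, ← add_assoc, eq_iff_iff] using
        hR.shift (m := m + a) (n := n + a) (by omega) (by omega)
    · intro a b ha; funext m n
      simp only [right, ← add_assoc, hR.shift ha (by omega : K ≤ n + b + a)]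
    · intro a b hb; funext m n
      simp only [right, add_right_comm _ p, ← add_assoc,
        hR.stretch_right (by omega : a + K ≤ n + b + a)]
    · intro a b ha; funext m n
      simp only [left, ← add_assoc, hR.shift (by omega : K ≤ m + b + a) ha]
    · intro a b hb; funext m n
      simp only [left, add_right_comm _ p, ← add_assoc,
        hR.stretch_left (by omega : m + b + a ≥ a + K)]
  refine RegularRel.of_mem_finite_closed hfin (.inl (.inl (.inl ⟨0, rfl⟩))) ?_ ?_ ?_ <;>
    rintro H (((⟨a, rfl⟩ | ⟨⟨a, b⟩, rfl⟩) | ⟨⟨a, b⟩, rfl⟩) | rfl) <;>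
    try (refine .inr (funext₂ fun m n => ?_); simp [shifted, right, left]; done)
  -- the seven derivatives not listed below are empty
  · exact .inl (.inl (.inl ⟨a + 1, by funext m n; simp only [shifted]; congr 1 <;> omega⟩))
  · exact .inl (.inr ⟨(a, 1), by funext m n; simp [left, shifted, uncurry]⟩)
  · exact .inl (.inr ⟨(a, b + 1), by
      funext m n; simp [left, uncurry, ← add_assoc, add_right_comm _ 1 b]⟩)
  · exact .inl (.inl (.inr ⟨(a, 1), by funext m n; simp [right, shifted, uncurry]⟩))
  · exact .inl (.inl (.inr ⟨(a, b + 1), by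
      funext m n; simp [right, uncurry, ← add_assoc, add_right_comm _ 1 b]⟩))

def restrictAbove (t : ℕ) (S : ℕ → ℕ → Prop) (m n : ℕ) : Prop := t ≤ m ∧ t ≤ n ∧ S m n

instance {t : ℕ} {S : ℕ → ℕ → Prop} [Std.Symm S] : Std.Symm (restrictAbove t S) :=
  ⟨fun _ _ ⟨hm, hn, h⟩ => ⟨hn, hm, symm h⟩⟩

theorem restrictAbove_le {t : ℕ} {S : ℕ → ℕ → Prop} : restrictAbove t S ≤ S :=
  fun _ _ h => h.2.2

theorem restrictAbove_anti {t t' : ℕ} {S : ℕ → ℕ → Prop} (h : t ≤ t') :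
    restrictAbove t' S ≤ restrictAbove t S :=
  fun _ _ ⟨hm, hn, hS⟩ => ⟨h.trans hm, h.trans hn, hS⟩

def shortAbove (t K : ℕ) (S : ℕ → ℕ → Prop) (m n : ℕ) : Prop :=
  restrictAbove t S m n ∧ m < n + K ∧ n < m + K

theorem shortAbove_le {t K : ℕ} {S : ℕ → ℕ → Prop} : shortAbove t K S ≤ restrictAbove t S :=
  fun _ _ h => h.1

theorem Relation.ReflTransGen.of_restrictAbove {t m n : ℕ} {S : ℕ → ℕ → Prop}
    (h : ReflTransGen (restrictAbove t S) m n) : ReflTransGen S m n :=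
  ReflTransGen.mono restrictAbove_le _ _ h

theorem Relation.ReflTransGen.of_shortAbove {t K m n : ℕ} {S : ℕ → ℕ → Prop}
    (h : ReflTransGen (shortAbove t K S) m n) : ReflTransGen (restrictAbove t S) m n :=
  ReflTransGen.mono shortAbove_le _ _ h

structure Pumps (E : ℕ → ℕ → Prop) (Q x : ℕ) : Prop where
  down : E (x - Q) x
  up : E x (x + Q)

theorem Pumps.down_add {E : ℕ → ℕ → Prop} {Q x : ℕ} (h : Pumps E Q (x + Q)) : E x (x + Q) := by
  simpa using h.down

section Connectivity

variable {S : ℕ → ℕ → Prop} {K p t : ℕ}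

namespace EventuallyPeriodicRel

theorem reflTransGen_restrictAbove_add_iff (hS : EventuallyPeriodicRel S K p) (ht : K ≤ t)
    {m n : ℕ} :
    ReflTransGen (restrictAbove (t + p) S) (m + p) (n + p) ↔
      ReflTransGen (restrictAbove t S) m n := by
  constructor
  · intro h
    simpa [onFun] using ReflTransGen.lift (p := restrictAbove t S) (· - p)
      (fun a b ⟨ha, hb, hab⟩ => show restrictAbove t S (a - p) (b - p) from
        ⟨by omega, by omega, (hS.shift (by omega) (by omega)).mp
          (by rwa [Nat.sub_add_cancel (by omega), Nat.sub_add_cancel (by omega)])⟩) _ _ h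
  · exact ReflTransGen.lift (p := restrictAbove (t + p) S) (· + p)
      (fun a b ⟨ha, hb, hab⟩ => show restrictAbove (t + p) S (a + p) (b + p) from
        ⟨by omega, by omega, (hS.shift (by omega) (by omega)).mpr hab⟩) _ _

theorem reflTransGen_restrictAbove_sub (hS : EventuallyPeriodicRel S K p) (ht : K + p ≤ t)
    {m n : ℕ} (hm : t ≤ m) (hn : t ≤ n) (h : ReflTransGen (restrictAbove t S) m n) :
    ReflTransGen (restrictAbove (t - p) S) (m - p) (n - p) := by
  rwa [← hS.reflTransGen_restrictAbove_add_iff (by omega), Nat.sub_add_cancel (by omega),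
    Nat.sub_add_cancel (by omega), Nat.sub_add_cancel (by omega)]

theorem reflTransGen_restrictAbove_add_mul (hS : EventuallyPeriodicRel S K p) (ht : K ≤ t)
    {b : ℕ} (h : ReflTransGen (restrictAbove t S) b (b + p)) (k : ℕ) :
    ReflTransGen (restrictAbove t S) b (b + k * p) := by
  induction k with
  | zero => simpa using ReflTransGen.refl
  | succ k ih =>
    have step := ((hS.mul k).reflTransGen_restrictAbove_add_iff ht).mpr h
    rw [add_right_comm] at step
    rw [add_mul, one_mul, ← add_assoc]
    exact ih.trans (ReflTransGen.mono (restrictAbove_anti (by omega)) _ _ step)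

theorem pumps_of_reflTransGen_restrictAbove {Q b : ℕ} (hS : EventuallyPeriodicRel S K Q)
    (ht : K + Q ≤ t) (hb : t ≤ b) (h : ReflTransGen (restrictAbove t S) b (b + Q)) :
    Pumps (ReflTransGen S) Q b := by
  have down := hS.reflTransGen_restrictAbove_sub ht hb (by omega) h
  rw [Nat.add_sub_cancel] at down
  exact ⟨down.of_restrictAbove, h.of_restrictAbove⟩

end EventuallyPeriodicRel

theorem exists_mem_Ico_of_reflTransGen_shortAbove {x u c : ℕ}
    (h : ReflTransGen (shortAbove t K S) x u) (hc : c ≤ x) (hu : u < c + K) :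
    ∃ z, c ≤ z ∧ z < c + K ∧ ReflTransGen (shortAbove t K S) x z := by
  induction h using ReflTransGen.head_induction_on with
  | refl => exact ⟨u, hc, hu, .refl⟩
  | @head x x' step _ ih =>
    by_cases hx : x < c + K
    · exact ⟨x, hc, hx, .refl⟩
    · obtain ⟨z, hz, hzK, hz'⟩ := ih (by have := step.2.1; omega)
      exact ⟨z, hz, hzK, hz'.head step⟩

theorem exists_long_edge_or_short_descent {x y : ℕ} (h : ReflTransGen S x y) (hy : y < t)
    (hx : t ≤ x) :
    (∃ u v, ReflTransGen (shortAbove t K S) x u ∧ t ≤ u ∧ S u v ∧ (u + K ≤ v ∨ v + K ≤ u)) ∨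
      ∃ u, ReflTransGen (shortAbove t K S) x u ∧ u < t + K := by
  induction h using ReflTransGen.head_induction_on with
  | refl => omega
  | @head x x' step _ ih =>
    by_cases hlong : x + K ≤ x' ∨ x' + K ≤ x
    · exact .inl ⟨x, x', .refl, hx, step, hlong⟩
    by_cases hx' : x' < t
    · exact .inr ⟨x, .refl, by omega⟩
    have hstep : shortAbove t K S x x' := ⟨⟨hx, by omega, step⟩, by omega, by omega⟩
    rcases ih (by omega) with ⟨u, v, hu, huv⟩ | ⟨u, hu, hut⟩
    · exact .inl ⟨u, v, hu.head hstep, huv⟩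
    · exact .inr ⟨u, hu.head hstep, hut⟩

theorem exists_lt_dvd_sub_of_short_descent (hp : 0 < p) {x u : ℕ}
    (h : ReflTransGen (shortAbove t K S) x u) (hu : u < t + K) (hx : t + p * K ≤ x) :
    ∃ a b, t ≤ a ∧ a < b ∧ b < a + (p + 1) * K ∧ p ∣ b - a ∧
      ReflTransGen (shortAbove t K S) x a ∧ ReflTransGen (shortAbove t K S) x b := by
  have band (j : Fin (p + 1)) :=
    exists_mem_Ico_of_reflTransGen_shortAbove h (c := t + j * K)
      (by have := Nat.mul_le_mul_right K (Nat.lt_succ_iff.mp j.2); omega) (by omega)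
  choose z hz hzK hxz using band
  obtain ⟨i, j, hij, hmod⟩ := Fintype.exists_ne_map_eq_of_card_lt
    (fun j => (⟨z j % p, Nat.mod_lt _ hp⟩ : Fin p)) (by simp)
  wlog hlt : (i : ℕ) < j generalizing i j
  · exact this j i hij.symm hmod.symm (by omega)
  have hi : i * K + K ≤ j * K := by
    simpa [Nat.succ_mul] using Nat.mul_le_mul_right K (Nat.succ_le_of_lt hlt)
  have hj : j * K ≤ p * K := Nat.mul_le_mul_right K (Nat.lt_succ_iff.mp j.2)
  have := hz i; have := hz j; have := hzK i; have := hzK j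
  refine ⟨z i, z j, by omega, by omega, by rw [Nat.succ_mul]; omega, ?_, hxz i, hxz j⟩
  exact (Nat.modEq_iff_dvd' (by omega)).mp (congrArg Fin.val hmod)

theorem reflTransGen_restrictAbove_or_exists_lt {m n : ℕ} (h : ReflTransGen S m n) (t : ℕ) :
    ReflTransGen (restrictAbove t S) m n ∨ ∃ c < t, ReflTransGen S m c ∧ ReflTransGen S c n := by
  induction h using ReflTransGen.head_induction_on with
  | refl => exact .inl .refl
  | @head m m' step rest ih =>
    by_cases hm : m < t
    · exact .inr ⟨m, hm, .refl, rest.head step⟩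
    by_cases hm' : m' < t
    · exact .inr ⟨m', hm', .single step, rest⟩
    rcases ih with h | ⟨c, hc, hm'c, hcn⟩
    · exact .inl (h.head ⟨by omega, by omega, step⟩)
    · exact .inr ⟨c, hc, hm'c.head step, hcn⟩

variable [Std.Symm S]

theorem Pumps.of_reflTransGen_restrictAbove {Q x u : ℕ} (hS : EventuallyPeriodicRel S K Q)
    (ht : K + Q ≤ t) (hx : t ≤ x) (hu : t ≤ u) (h : ReflTransGen (restrictAbove t S) x u)
    (hpu : Pumps (ReflTransGen S) Q u) : Pumps (ReflTransGen S) Q x := by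
  have down := hS.reflTransGen_restrictAbove_sub ht hx hu h
  have up := (hS.reflTransGen_restrictAbove_add_iff (by omega)).mpr h
  exact ⟨down.of_restrictAbove.trans (hpu.down.trans (symm h.of_restrictAbove)),
    h.of_restrictAbove.trans (hpu.up.trans (symm up.of_restrictAbove))⟩

namespace EventuallyPeriodicRel

theorem pumps_of_long_edge_of_le {Q u v : ℕ} (hS : EventuallyPeriodicRel S K Q) (huv : S u v)
    (hlong : u + K ≤ v) (hu : K + Q ≤ u) : Pumps (ReflTransGen S) Q u := by
  obtain ⟨u, rfl⟩ : ∃ u', u = u' + Q := ⟨u - Q, by omega⟩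
  obtain ⟨v, rfl⟩ : ∃ v', v = v' + Q := ⟨v - Q, by omega⟩
  have huv' : S u v := (hS.shift (by omega) (by omega)).mp huv
  refine ⟨?_, ?_⟩
  · rw [Nat.add_sub_cancel]
    exact .head ((hS.stretch_right (by omega)).mpr huv') (.single (symm huv))
  · exact .head ((hS.stretch_right (by omega)).mpr huv)
      (.single (symm ((hS.shift (by omega) (by omega)).mpr huv)))

theorem pumps_of_long_edge {Q u v : ℕ} (hS : EventuallyPeriodicRel S K Q) (huv : S u v)
    (hlong : u + K ≤ v ∨ v + K ≤ u) (hu : 2 * K + 2 * Q ≤ u) : Pumps (ReflTransGen S) Q u := by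
  rcases hlong with hlong | hlong
  · exact hS.pumps_of_long_edge_of_le huv hlong (by omega)
  by_cases hv : K + Q ≤ v
  · exact (hS.pumps_of_long_edge_of_le (symm huv) hlong hv).of_reflTransGen_restrictAbove hS
      le_rfl (by omega) hv (.single ⟨by omega, hv, huv⟩)
  -- now `v + K + Q ≤ u`, so the edge can also be shortened by `Q`
  · obtain ⟨u, rfl⟩ : ∃ u', u = u' + Q := ⟨u - Q, by omega⟩
    refine ⟨?_, ?_⟩
    · rw [Nat.add_sub_cancel]
      exact .head ((hS.stretch_left (by omega)).mp huv) (.single (symm huv))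
    · exact .head huv (.single (symm ((hS.stretch_left (by omega)).mpr huv)))

theorem pumps_of_far (hS : EventuallyPeriodicRel S K p) (hp : 0 < p) {Q x y : ℕ} (hQp : p ∣ Q)
    (hQ : ∀ δ, 0 < δ → δ < (p + 1) * K → δ ∣ Q) (hxy : ReflTransGen S x y)
    (hfar : y + (p + 1) * K + 2 * K + 2 * Q < x) : Pumps (ReflTransGen S) Q x := by
  have hSQ := hS.of_dvd hQp
  have hp1 : (p + 1) * K = p * K + K := Nat.succ_mul p K
  set t := x - (p + 1) * K
  have hx : t ≤ x := Nat.sub_le _ _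
  rcases exists_long_edge_or_short_descent (K := K) hxy (t := t) (by omega) hx with
    ⟨u, v, hxu, htu, huv, hlong⟩ | ⟨u, hxu, hu⟩
  · exact (hSQ.pumps_of_long_edge huv hlong (by omega)).of_reflTransGen_restrictAbove hSQ
      (by omega) hx htu hxu.of_shortAbove
  obtain ⟨a, b, hta, hab, hba, hdvd, hxa, hxb⟩ :=
    exists_lt_dvd_sub_of_short_descent hp hxu hu (by omega)
  have hab' : ReflTransGen (restrictAbove t S) a (a + (b - a)) := by
    rw [Nat.add_sub_cancel' hab.le]
    exact (symm hxa.of_shortAbove).trans hxb.of_shortAbove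
  have haQ := (hS.of_dvd hdvd).reflTransGen_restrictAbove_add_mul (by omega) hab' (Q / (b - a))
  rw [Nat.div_mul_cancel (hQ (b - a) (by omega) (by omega))] at haQ
  exact (hSQ.pumps_of_reflTransGen_restrictAbove (by omega) hta haQ).of_reflTransGen_restrictAbove
    hSQ (by omega) hx hta hxa.of_shortAbove

theorem reflTransGen (hS : EventuallyPeriodicRel S K p) (hp : 0 < p) :
    ∃ A Q, 0 < Q ∧ EventuallyPeriodicRel (ReflTransGen S) A Q := by
  set Q := p * ((p + 1) * K)!
  have hQp : p ∣ Q := dvd_mul_right _ _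
  have hSQ := hS.of_dvd hQp
  have far {x y : ℕ} (h : ReflTransGen S x y) (hfar : y + (p + 1) * K + 2 * K + 2 * Q < x) :
      Pumps (ReflTransGen S) Q x :=
    hS.pumps_of_far hp hQp (fun δ h0 h1 => (Nat.dvd_factorial h0 h1.le).mul_left p) h hfar
  have restrictAbove_or_pumps {m n : ℕ} (t : ℕ) (h : ReflTransGen S m n)
      (hm : t + (p + 1) * K + 2 * K + 2 * Q < m) (hn : t + (p + 1) * K + 2 * K + 2 * Q < n) :
      ReflTransGen (restrictAbove t S) m n ∨
        Pumps (ReflTransGen S) Q m ∧ Pumps (ReflTransGen S) Q n := by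
    rcases reflTransGen_restrictAbove_or_exists_lt h t with h | ⟨c, hc, hmc, hcn⟩
    · exact .inl h
    · exact .inr ⟨far hmc (by omega), far (symm hcn) (by omega)⟩
  refine ⟨K + Q + (p + 1) * K + 2 * K + 2 * Q + 1, Q, Nat.mul_pos hp (Nat.factorial_pos _),
    .of_symm (fun hm hn => ⟨fun h => ?_, fun h => ?_⟩) (fun hmn => ⟨fun h => ?_, fun h => ?_⟩)⟩
  · rcases restrictAbove_or_pumps (K + Q) h (by omega) (by omega) with h | ⟨hm', hn'⟩
    · exact ((hSQ.reflTransGen_restrictAbove_add_iff le_rfl).mp h).of_restrictAbove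
    · exact hm'.down_add.trans (h.trans (symm hn'.down_add))
  · rcases restrictAbove_or_pumps K h (by omega) (by omega) with h | ⟨hm', hn'⟩
    · exact ((hSQ.reflTransGen_restrictAbove_add_iff le_rfl).mpr h).of_restrictAbove
    · exact (symm hm'.up).trans (h.trans hn'.up)
  · exact h.trans (symm (far (symm h) (by omega)).down_add)
  · exact h.trans (far (symm h) (by omega)).up

end EventuallyPeriodicRel

end Connectivity

theorem stmt4 (R : ℕ → ℕ → Prop) (hR : RegularRel R) :
    RegularRel (Relation.EqvGen R) := by
  obtain ⟨K, p, hp, hRp⟩ := hR.exists_eventuallyPeriodicRel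
  obtain ⟨A, Q, hQ, hE⟩ := hRp.symmGen.reflTransGen hp
  rw [← EqvGen.reflTransGen_symmGen]
  exact hE.regularRel hQ
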